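/- Let λ > 0, let (T_i)_{i≥1} be i.i.d. exponential random variables with rate λ, let S_k = T_1 + ... + T_k, and let X be an exponential random variable with rate λ independent of the sequence (T_i). Let N = #{k ≥ 1 : S_k < X} be the number of indices k with S_k < X. Then the conditional expectation E[N | N ≥ 1] = 2; equivalently, the conditional expected number of redundant receptions E[N − 1 | N ≥ 1] = 1. (Theorem 1, Duplication Analysis: under the RMPR protocol, any packet received by a destination node is expected to be received two times on average.) -/

import Mathlib

open MeasureTheory ProbabilityTheory Real Filter Topology
open scoped ENNReal

/-!
Integrating the tail `P(X > s) = e^{-λs}` against the law of `S` gives `P(S < X) = E[e^{-λS}]`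
for any nonnegative `S` independent of `X ~ Exp(λ)`; the moment generating function of `Exp(λ)`
at `-λ` is `1/2`, so `P(S_k < X) = 2^{-k}`. The partial sums increase, so almost surely
`{N > k} = {S_{k+1} < X}` (by Borel–Cantelli only finitely many `S_k` lie below `X`). Hence
`E[N] = ∑_{k ≥ 1} 2^{-k} = 1` and `P(N ≥ 1) = 1/2`; since `N` vanishes off `{N ≥ 1}`,
`E[N; N ≥ 1] = 1 = 2 P(N ≥ 1)` and `E[N - 1; N ≥ 1] = 1/2`.
-/

namespace ProbabilityTheory

open Set

variable {r : ℝ}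

lemma expMeasure_Iio_zero (r : ℝ) : expMeasure r (Iio 0) = 0 := by
  rw [expMeasure, gammaMeasure, withDensity_apply _ measurableSet_Iio]
  exact lintegral_gammaPDF_of_nonpos le_rfl

lemma expMeasure_Ioi (hr : 0 < r) {x : ℝ} (hx : 0 ≤ x) :
    expMeasure r (Ioi x) = ENNReal.ofReal (rexp (-(r * x))) := by
  have := isProbabilityMeasure_expMeasure hr
  have hexp : rexp (-(r * x)) ≤ 1 := exp_le_one_iff.2 (by nlinarith)
  rw [← compl_Iic, prob_compl_eq_one_sub measurableSet_Iic, ← ofReal_cdf, cdf_expMeasure_eq hr,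
    if_pos hx, ← ENNReal.ofReal_one, ← ENNReal.ofReal_sub _ (by linarith), sub_sub_cancel]

lemma lintegral_exp_mul_expMeasure (hr : 0 < r) {t : ℝ} (ht : t < r) :
    ∫⁻ x, ENNReal.ofReal (rexp (t * x)) ∂expMeasure r = ENNReal.ofReal (r / (r - t)) := by
  have hdens : ∀ x, exponentialPDF r x * ENNReal.ofReal (rexp (t * x))
      = ENNReal.ofReal (r / (r - t)) * exponentialPDF (r - t) x := by
    intro x
    simp only [exponentialPDF_eq]
    rw [← ENNReal.ofReal_mul (by positivity), ← ENNReal.ofReal_mul (by positivity)]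
    congr 1
    split_ifs
    · rw [← mul_assoc, div_mul_cancel₀ _ (sub_pos.2 ht).ne', mul_assoc, ← exp_add]
      ring_nf
    · simp
  have hpdf : ∀ s, Measurable (exponentialPDF s) :=
    fun s => (measurable_exponentialPDFReal s).ennreal_ofReal
  change ∫⁻ x, _ ∂volume.withDensity (exponentialPDF r) = _
  rw [lintegral_withDensity_eq_lintegral_mul _ (hpdf r) (by fun_prop)]
  simp only [Pi.mul_apply, hdens]
  rw [lintegral_const_mul _ (hpdf _), lintegral_exponentialPDF_eq_one (sub_pos.2 ht), mul_one]

variable {Ω : Type*} {mΩ : MeasurableSpace Ω} {μ : Measure Ω} {Y : Ω → ℝ}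

lemma aemeasurable_of_map_eq_expMeasure (hr : 0 < r) (hY : μ.map Y = expMeasure r) :
    AEMeasurable Y μ := by
  have := isProbabilityMeasure_expMeasure hr
  exact aemeasurable_of_map_neZero (hY ▸ inferInstance)

lemma ae_nonneg_of_map_eq_expMeasure (hr : 0 < r) (hY : μ.map Y = expMeasure r) :
    ∀ᵐ ω ∂μ, 0 ≤ Y ω := by
  have hneg : μ (Y ⁻¹' Iio 0) = 0 := by
    rw [← Measure.map_apply_of_aemeasurable (aemeasurable_of_map_eq_expMeasure hr hY)
      measurableSet_Iio, hY, expMeasure_Iio_zero]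
  filter_upwards [measure_eq_zero_iff_ae_notMem.1 hneg] with ω hω
  simpa using hω

lemma mgf_of_map_eq_expMeasure (hr : 0 < r) (hY : μ.map Y = expMeasure r) {t : ℝ} (ht : t < r) :
    mgf Y μ t = r / (r - t) := by
  have hmap := integral_map (f := fun x => rexp (t * x))
    (aemeasurable_of_map_eq_expMeasure hr hY) (by fun_prop)
  rw [mgf, ← hmap, hY,
    integral_eq_lintegral_of_nonneg_ae (ae_of_all _ fun x => (exp_pos _).le) (by fun_prop),
    lintegral_exp_mul_expMeasure hr ht, ENNReal.toReal_ofReal (div_nonneg hr.le (sub_pos.2 ht).le)]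

lemma measure_lt_of_indepFun_of_map_eq_expMeasure [IsFiniteMeasure μ] (hr : 0 < r) {S : Ω → ℝ}
    (hS : AEMeasurable S μ) (hS₀ : ∀ᵐ ω ∂μ, 0 ≤ S ω) (hind : IndepFun S Y μ)
    (hY : μ.map Y = expMeasure r) :
    μ {ω | S ω < Y ω} = ENNReal.ofReal (mgf S μ (-r)) := by
  have := isProbabilityMeasure_expMeasure hr
  have hYm := aemeasurable_of_map_eq_expMeasure hr hY
  have hlt : MeasurableSet {p : ℝ × ℝ | p.1 < p.2} := measurableSet_lt measurable_fst measurable_snd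
  have hint : Integrable (fun ω => rexp (-r * S ω)) μ := by
    refine Integrable.mono' (integrable_const 1) (by fun_prop) ?_
    filter_upwards [hS₀] with ω hω
    rw [norm_of_nonneg (exp_pos _).le, exp_le_one_iff]
    nlinarith
  calc μ {ω | S ω < Y ω} = (μ.map S).prod (expMeasure r) {p | p.1 < p.2} := by
        rw [← hY, ← (indepFun_iff_map_prod_eq_prod_map_map hS hYm).1 hind,
          Measure.map_apply_of_aemeasurable (hS.prodMk hYm) hlt]
        rfl
    _ = ∫⁻ s, expMeasure r (Ioi s) ∂μ.map S := Measure.prod_apply hlt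
    _ = ∫⁻ s, ENNReal.ofReal (rexp (-r * s)) ∂μ.map S := by
        refine lintegral_congr_ae ?_
        filter_upwards [(ae_map_iff hS measurableSet_Ici).2 hS₀] with s hs
        rw [expMeasure_Ioi hr hs, neg_mul]
    _ = ∫⁻ ω, ENNReal.ofReal (rexp (-r * S ω)) ∂μ := lintegral_map' (by fun_prop) hS
    _ = ENNReal.ofReal (mgf S μ (-r)) :=
        (ofReal_integral_eq_lintegral_ofReal hint (ae_of_all _ fun ω => (exp_pos _).le)).symm

lemma measure_sum_lt_of_iIndepFun_of_map_eq_expMeasure (hr : 0 < r) {T : ℕ → Ω → ℝ} {X : Ω → ℝ}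
    (hT : ∀ i, μ.map (T i) = expMeasure r) (hX : μ.map X = expMeasure r)
    (hind : iIndepFun (fun o : Option ℕ => o.elim X T) μ) (k : ℕ) :
    μ {ω | ∑ i ∈ Finset.range k, T i ω < X ω} = 2⁻¹ ^ k := by
  have := hind.isProbabilityMeasure
  have hTm i := aemeasurable_of_map_eq_expMeasure hr (hT i)
  have hFm (o : Option ℕ) : AEMeasurable (o.elim X T) μ :=
    o.rec (aemeasurable_of_map_eq_expMeasure hr hX) hTm
  have hsum : ∑ i ∈ Finset.range k, T i
      = ∑ o ∈ (Finset.range k).map Function.Embedding.some, o.elim X T := by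
    simp [Finset.sum_map]
  have hindS : IndepFun (∑ i ∈ Finset.range k, T i) X μ :=
    hsum ▸ hind.indepFun_finsetSum_of_notMem₀ hFm (i := none) (by simp)
  have hS₀ : ∀ᵐ ω ∂μ, 0 ≤ (∑ i ∈ Finset.range k, T i) ω := by
    filter_upwards [ae_all_iff.2 fun i => ae_nonneg_of_map_eq_expMeasure hr (hT i)] with ω hω
    simpa using Finset.sum_nonneg fun i _ => hω i
  have hmgf : mgf (∑ i ∈ Finset.range k, T i) μ (-r) = 2⁻¹ ^ k := by
    have hindT : iIndepFun T μ := hind.precomp (g := some) (Option.some_injective ℕ)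
    rw [hindT.mgf_sum₀ hTm]
    have h2 : r / (r - -r) = 2⁻¹ := by field_simp; ring
    simp only [mgf_of_map_eq_expMeasure hr (hT _) (by linarith : -r < r), h2,
      Finset.prod_const, Finset.card_range]
  have := measure_lt_of_indepFun_of_map_eq_expMeasure hr (by fun_prop) hS₀ hindS hX
  rw [hmgf, ENNReal.ofReal_pow (by norm_num), ENNReal.ofReal_inv_of_pos two_pos] at this
  simpa using this

end ProbabilityTheory

lemma Monotone.lt_ncard_setOf_lt_iff {α : Type*} [Preorder α] {s : ℕ → α} (hs : Monotone s)
    {x : α} (hx : ∃ k, ¬ s k < x) (k : ℕ) :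
    k < {j | 1 ≤ j ∧ s j < x}.ncard ↔ s (k + 1) < x := by
  set A := {j | s (j + 1) < x}
  have hA : IsLowerSet A := fun a b hba ha => (hs (by omega : b + 1 ≤ a + 1)).trans_lt ha
  obtain ⟨m, hm⟩ := hA.eq_univ_or_Iio.resolve_left fun h => by
    obtain ⟨n, hn⟩ := hx
    exact hn ((hs n.le_succ).trans_lt (h ▸ Set.mem_univ n : n ∈ A))
  have himage : {j | 1 ≤ j ∧ s j < x} = (· + 1) '' A := by
    ext j
    cases j <;> simp [A]
  rw [himage, Set.ncard_image_of_injective _ (add_left_injective 1), hm, Set.ncard_Iio_nat,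
    ← Set.mem_Iio, ← hm]
  rfl

lemma ENNReal.natCast_eq_tsum_ite_lt (n : ℕ) : (n : ℝ≥0∞) = ∑' k, if k < n then 1 else 0 := by
  rw [tsum_eq_sum (s := Finset.range n) fun k hk => if_neg (by simpa using hk),
    Finset.sum_ite_of_true fun k hk => Finset.mem_range.1 hk]
  simp

section PartialSums

variable {Ω : Type*} {mΩ : MeasurableSpace Ω} {μ : Measure Ω} {r : ℝ} {T : ℕ → Ω → ℝ}
  {X : Ω → ℝ} {N : Ω → ℕ}

lemma tsum_measure_sum_lt_of_iIndepFun_of_map_eq_expMeasure (hr : 0 < r)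
    (hT : ∀ i, μ.map (T i) = expMeasure r) (hX : μ.map X = expMeasure r)
    (hind : iIndepFun (fun o : Option ℕ => o.elim X T) μ) :
    ∑' k, μ {ω | ∑ i ∈ Finset.range (k + 1), T i ω < X ω} = 1 := by
  simp only [measure_sum_lt_of_iIndepFun_of_map_eq_expMeasure hr hT hX hind,
    ENNReal.tsum_geometric_add_one, ENNReal.one_sub_inv_two, inv_inv]
  exact ENNReal.inv_mul_cancel two_ne_zero ENNReal.ofNat_ne_top

lemma ae_lt_ncard_iff_sum_lt (hr : 0 < r) (hT : ∀ i, μ.map (T i) = expMeasure r)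
    (hX : μ.map X = expMeasure r) (hind : iIndepFun (fun o : Option ℕ => o.elim X T) μ)
    (hN : ∀ ω, N ω = {k : ℕ | 1 ≤ k ∧ ∑ i ∈ Finset.range k, T i ω < X ω}.ncard) :
    ∀ᵐ ω ∂μ, ∀ k, k < N ω ↔ ∑ i ∈ Finset.range (k + 1), T i ω < X ω := by
  have hsum := tsum_measure_sum_lt_of_iIndepFun_of_map_eq_expMeasure hr hT hX hind
  filter_upwards [ae_eventually_notMem (hsum ▸ ENNReal.one_ne_top),
    ae_all_iff.2 fun i => ae_nonneg_of_map_eq_expMeasure hr (hT i)] with ω hfin hT₀ k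
  have hmono : Monotone fun k => ∑ i ∈ Finset.range k, T i ω :=
    monotone_nat_of_le_succ fun n => by simpa [Finset.sum_range_succ] using hT₀ n
  rw [hN]
  -- `ncard` is `0` on infinite sets, hence the need for some partial sum to exceed `X ω`
  exact hmono.lt_ncard_setOf_lt_iff (hfin.exists.elim fun n hn => ⟨n + 1, hn⟩) k

lemma nullMeasurableSet_sum_lt (hr : 0 < r) (hT : ∀ i, μ.map (T i) = expMeasure r)
    (hX : μ.map X = expMeasure r) (k : ℕ) :
    NullMeasurableSet {ω | ∑ i ∈ Finset.range k, T i ω < X ω} μ :=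
  nullMeasurableSet_lt
    (Finset.aemeasurable_fun_sum _ fun i _ => aemeasurable_of_map_eq_expMeasure hr (hT i))
    (aemeasurable_of_map_eq_expMeasure hr hX)

lemma ae_natCast_ncard_eq_tsum_indicator (hr : 0 < r) (hT : ∀ i, μ.map (T i) = expMeasure r)
    (hX : μ.map X = expMeasure r) (hind : iIndepFun (fun o : Option ℕ => o.elim X T) μ)
    (hN : ∀ ω, N ω = {k : ℕ | 1 ≤ k ∧ ∑ i ∈ Finset.range k, T i ω < X ω}.ncard) :
    (fun ω => (N ω : ℝ≥0∞)) =ᵐ[μ] fun ω =>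
      ∑' k, {ω | ∑ i ∈ Finset.range (k + 1), T i ω < X ω}.indicator 1 ω := by
  filter_upwards [ae_lt_ncard_iff_sum_lt hr hT hX hind hN] with ω hω
  rw [ENNReal.natCast_eq_tsum_ite_lt]
  simp only [Set.indicator_apply, Set.mem_ofPred_eq, hω, Pi.one_apply]

lemma aemeasurable_natCast_ncard (hr : 0 < r) (hT : ∀ i, μ.map (T i) = expMeasure r)
    (hX : μ.map X = expMeasure r) (hind : iIndepFun (fun o : Option ℕ => o.elim X T) μ)
    (hN : ∀ ω, N ω = {k : ℕ | 1 ≤ k ∧ ∑ i ∈ Finset.range k, T i ω < X ω}.ncard) :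
    AEMeasurable (fun ω => (N ω : ℝ≥0∞)) μ :=
  (AEMeasurable.tsum fun k => measurable_one.aemeasurable.indicator₀
    (nullMeasurableSet_sum_lt hr hT hX (k + 1))).congr
    (ae_natCast_ncard_eq_tsum_indicator hr hT hX hind hN).symm

lemma lintegral_natCast_ncard (hr : 0 < r) (hT : ∀ i, μ.map (T i) = expMeasure r)
    (hX : μ.map X = expMeasure r) (hind : iIndepFun (fun o : Option ℕ => o.elim X T) μ)
    (hN : ∀ ω, N ω = {k : ℕ | 1 ≤ k ∧ ∑ i ∈ Finset.range k, T i ω < X ω}.ncard) :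
    ∫⁻ ω, (N ω : ℝ≥0∞) ∂μ = 1 := by
  have hE k := nullMeasurableSet_sum_lt hr hT hX (μ := μ) (k + 1)
  rw [lintegral_congr_ae (ae_natCast_ncard_eq_tsum_indicator hr hT hX hind hN),
    lintegral_tsum fun k => measurable_one.aemeasurable.indicator₀ (hE k)]
  simpa only [lintegral_indicator_one₀ (hE _)] using
    tsum_measure_sum_lt_of_iIndepFun_of_map_eq_expMeasure hr hT hX hind

end PartialSums

/-- **Theorem 1 (Duplication Analysis).**
Let `λ > 0`, let `(T_i)` be i.i.d. exponential random variables with rate `λ`,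
let `S_k = T_1 + ... + T_k` (here `S k = ∑ i ∈ Finset.range k, T i`), and let `X` be an
exponential random variable with rate `λ`, independent of the sequence `(T_i)`.
Let `N = #{k ≥ 1 : S_k < X}`.  Then the conditional expectation `E[N | N ≥ 1] = 2`
(i.e. `E[N · 1_{N ≥ 1}] = 2 · P(N ≥ 1)`); equivalently, the conditional expected number of
redundant receptions `E[N − 1 | N ≥ 1] = 1`: under the RMPR protocol, any packet received
by a destination node is expected to be received two times on average. -/
theorem expected_duplication_eq_two
    {Ω : Type*} [MeasureSpace Ω] [IsProbabilityMeasure (ℙ : Measure Ω)]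
    (lam : ℝ) (hlam : 0 < lam) (T : ℕ → Ω → ℝ) (X : Ω → ℝ)
    (hT : ∀ i, Measure.map (T i) ℙ = ProbabilityTheory.expMeasure lam)
    (hX : Measure.map X ℙ = ProbabilityTheory.expMeasure lam)
    (hindep : iIndepFun
      (fun o : Option ℕ => o.elim X T) ℙ)
    (N : Ω → ℕ)
    (hN : ∀ ω, N ω = Set.ncard {k : ℕ | 1 ≤ k ∧ ∑ i ∈ Finset.range k, T i ω < X ω}) :
    (∫ ω in {ω | 1 ≤ N ω}, (N ω : ℝ) ∂ℙ = 2 * (ℙ {ω | 1 ≤ N ω}).toReal) ∧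
    (∫ ω in {ω | 1 ≤ N ω}, ((N ω : ℝ) - 1) ∂ℙ = 1 * (ℙ {ω | 1 ≤ N ω}).toReal) := by
  have hNm := aemeasurable_natCast_ncard hlam hT hX hindep hN
  have hlint := lintegral_natCast_ncard hlam hT hX hindep hN
  have hInt : Integrable (fun ω => (N ω : ℝ)) ℙ := by
    simpa using integrable_toReal_of_lintegral_ne_top hNm (hlint ▸ ENNReal.one_ne_top)
  have hmean : ∫ ω in {ω | 1 ≤ N ω}, (N ω : ℝ) ∂ℙ = 1 := by
    rw [setIntegral_eq_integral_of_forall_compl_eq_zero fun ω hω => by simp_all]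
    simpa [hlint] using integral_toReal hNm (ae_of_all _ fun ω => ENNReal.natCast_lt_top (N ω))
  have hP : (ℙ {ω | 1 ≤ N ω}).toReal = 2⁻¹ := by
    have hset : {ω | 1 ≤ N ω} =ᵐ[ℙ] {ω | ∑ i ∈ Finset.range 1, T i ω < X ω} := by
      filter_upwards [ae_lt_ncard_iff_sum_lt hlam hT hX hindep hN] with ω hω
      exact propext (hω 0)
    rw [measure_congr hset, measure_sum_lt_of_iIndepFun_of_map_eq_expMeasure hlam hT hX hindep]
    simp
  refine ⟨by rw [hmean, hP]; norm_num, ?_⟩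
  rw [integral_sub hInt.integrableOn (integrable_const 1), hmean, setIntegral_const,
    measureReal_def, hP]
  norm_num
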